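/- Let G = (U, V, E) be a bipartite graph with |U| = |V| = n, edges colored red or blue, having at least one perfect matching but no perfect matching with an odd number of red edges. Then there exists a labeling L : U ∪ V → {0,1} with |L⁻¹(1)| ≡ n (mod 2) such that every edge lying in some perfect matching of G is consistent with L (red edges have equally-labeled endpoints and blue edges have differently-labeled endpoints). -/

import Mathlib

/-- An edge of the colored bipartite multigraph: left endpoint, right endpoint,
color (`true` = red, `false` = blue). -/
abbrev ColEdge (n : ℕ) := Fin n × Fin n × Bool

def IsPM {n : ℕ} (E M : Finset (ColEdge n)) : Prop :=
  M ⊆ E ∧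
  (∀ u : Fin n, (M.filter (fun e => e.1 = u)).card = 1) ∧
  (∀ v : Fin n, (M.filter (fun e => e.2.1 = v)).card = 1)

/-!
Fix a perfect matching `M₀ = {(u, σ₀ u, c₀ u)}` and contract its edges: an edge `(u, v, c)`
becomes an arc from `u` to `σ₀⁻¹ v`, weighted in `ZMod 2` by the number of red edges among it
and the `M₀`-edge at `v`. A closed walk through distinct vertices is an `M₀`-alternating cycle;
rerouting `M₀` along it gives another perfect matching, so its weight is even, and splitting at
repeated vertices shows that every closed walk has even weight. An edge `e` of a perfect
matching `M` closes up into a closed walk by following `M` and `M₀` alternately, so it can be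
traversed backwards with the same parity. The parity of walks from a fixed root is therefore a
potential `φ` on each component of the relevant edges; `φ` on the left and `φ ∘ σ₀⁻¹`
corrected by the colors of `M₀` on the right is a consistent labeling, and its size has the
parity of `n` plus the number of red edges of `M₀`.
-/

open Finset Function

variable {n : ℕ}

def matchingOf (σ : Fin n → Fin n) (c : Fin n → Bool) : Finset (ColEdge n) :=
  univ.image fun u => (u, σ u, c u)

lemma mem_matchingOf {σ : Fin n → Fin n} {c : Fin n → Bool} {e : ColEdge n} :
    e ∈ matchingOf σ c ↔ e = (e.1, σ e.1, c e.1) := by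
  constructor
  · intro he
    obtain ⟨u, -, rfl⟩ := mem_image.1 he
    rfl
  · intro he
    exact mem_image.2 ⟨e.1, mem_univ _, he.symm⟩

lemma isPM_matchingOf {E : Finset (ColEdge n)} {σ : Fin n → Fin n} {c : Fin n → Bool}
    (hσ : Injective σ) (hE : ∀ u, (u, σ u, c u) ∈ E) : IsPM E (matchingOf σ c) := by
  refine ⟨fun e he => ?_, fun u => card_eq_one.2 ⟨(u, σ u, c u), ?_⟩, fun v => ?_⟩
  · rw [mem_matchingOf.1 he]; exact hE _
  · ext e
    rw [mem_filter, mem_matchingOf, mem_singleton]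
    constructor
    · rintro ⟨he, rfl⟩; exact he
    · rintro rfl; exact ⟨rfl, rfl⟩
  · obtain ⟨u, rfl⟩ := (Finite.injective_iff_surjective.1 hσ) v
    refine card_eq_one.2 ⟨(u, σ u, c u), ?_⟩
    ext e
    rw [mem_filter, mem_matchingOf, mem_singleton]
    constructor
    · rintro ⟨he, hv⟩
      rw [he, hσ (hv.symm.trans (congrArg (·.2.1) he))]
    · rintro rfl; exact ⟨rfl, rfl⟩

lemma card_filter_matchingOf {σ : Fin n → Fin n} {c : Fin n → Bool}
    (p : ColEdge n → Prop) [DecidablePred p] :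
    #((matchingOf σ c).filter p) = #(univ.filter fun u => p (u, σ u, c u)) := by
  rw [matchingOf, filter_image, card_image_of_injective]
  intro u u' h
  exact congrArg Prod.fst h

lemma IsPM.exists_eq_matchingOf {E M : Finset (ColEdge n)} (hM : IsPM E M) :
    ∃ (σ : Equiv.Perm (Fin n)) (c : Fin n → Bool), M = matchingOf σ c := by
  choose f hf using fun u => card_eq_one.1 (hM.2.1 u)
  have hfM : ∀ e ∈ M, e = f e.1 := fun e he =>
    mem_singleton.1 (hf e.1 ▸ mem_filter.2 ⟨he, rfl⟩)
  have hf_mem : ∀ u, f u ∈ M ∧ (f u).1 = u := fun u =>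
    mem_filter.1 (hf u ▸ mem_singleton_self (f u))
  have hinj : Injective fun u => (f u).2.1 := by
    intro u u' h
    have := card_le_one.1 (hM.2.2 (f u).2.1).le (f u) (mem_filter.2 ⟨(hf_mem u).1, rfl⟩)
      (f u') (mem_filter.2 ⟨(hf_mem u').1, h.symm⟩)
    rw [← (hf_mem u).2, this, (hf_mem u').2]
  refine ⟨Equiv.ofBijective _ (Finite.injective_iff_bijective.1 hinj), fun u => (f u).2.2, ?_⟩
  have hf_eq : ∀ u, f u = (u, (f u).2.1, (f u).2.2) := fun u => Prod.ext (hf_mem u).2 rfl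
  ext e
  have hmem : e ∈ M ↔ e = f e.1 := ⟨hfM e, fun h => h.symm ▸ (hf_mem e.1).1⟩
  rw [hmem, mem_matchingOf]
  exact Iff.of_eq (congrArg (e = ·) (hf_eq e.1))

def bit (b : Bool) : ZMod 2 := if b then 1 else 0

lemma natCast_card_filter_eq_sum_bit {α : Type*} [Fintype α] (c : α → Bool) :
    (#(univ.filter fun a => c a = true) : ZMod 2) = ∑ a, bit (c a) :=
  natCast_card_filter _ _

def RedEven (E : Finset (ColEdge n)) : Prop :=
  ∀ (σ : Fin n → Fin n) (c : Fin n → Bool), Injective σ → (∀ u, (u, σ u, c u) ∈ E) →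
    ∑ u, bit (c u) = 0

lemma redEven_of_not_exists_odd {E : Finset (ColEdge n)}
    (h : ¬ ∃ M, IsPM E M ∧ Odd #(M.filter fun e => e.2.2 = true)) : RedEven E := by
  intro σ c hσ hE
  have hred := card_filter_matchingOf (σ := σ) (c := c) fun e => e.2.2 = true
  rw [← natCast_card_filter_eq_sum_bit, ZMod.natCast_eq_zero_iff_even, ← hred,
    ← Nat.not_odd_iff_even]
  exact fun hodd => h ⟨_, isPM_matchingOf hσ hE, hodd⟩

lemma List.exists_eq_append_cons_append_cons_of_not_nodup_map {α β : Type*} (f : α → β) :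
    ∀ {l : List α}, ¬(l.map f).Nodup →
      ∃ l₁ a l₂ b l₃, l = l₁ ++ a :: l₂ ++ b :: l₃ ∧ f a = f b
  | [], h => absurd List.nodup_nil h
  | a :: t, h => by
    rw [List.map_cons, List.nodup_cons, not_and_or, not_not] at h
    rcases h with ha | ht
    · obtain ⟨b, hbt, hb⟩ := List.mem_map.1 ha
      obtain ⟨t₁, t₂, rfl⟩ := List.append_of_mem hbt
      exact ⟨[], a, t₁, b, t₂, rfl, hb.symm⟩
    · obtain ⟨l₁, a', l₂, b, l₃, rfl, hab⟩ :=
        List.exists_eq_append_cons_append_cons_of_not_nodup_map f ht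
      exact ⟨a :: l₁, a', l₂, b, l₃, rfl, hab⟩

inductive IsWalk (A : Set (ColEdge n)) (ν : Fin n → Fin n) :
    Fin n → Fin n → List (ColEdge n) → Prop
  | nil (u : Fin n) : IsWalk A ν u u []
  | cons {e : ColEdge n} {w : Fin n} {l : List (ColEdge n)} :
      e ∈ A → IsWalk A ν (ν e.2.1) w l → IsWalk A ν e.1 w (e :: l)

namespace IsWalk

variable {A B : Set (ColEdge n)} {ν : Fin n → Fin n} {u x w : Fin n}
  {l l₁ l₂ : List (ColEdge n)}

lemma of_cons {e : ColEdge n} (h : IsWalk A ν u w (e :: l)) :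
    e ∈ A ∧ e.1 = u ∧ IsWalk A ν (ν e.2.1) w l := by
  cases h with
  | cons he hl => exact ⟨he, rfl, hl⟩

lemma append (h₁ : IsWalk A ν u x l₁) (h₂ : IsWalk A ν x w l₂) :
    IsWalk A ν u w (l₁ ++ l₂) := by
  induction h₁ with
  | nil => exact h₂
  | cons he _ ih => exact cons he (ih h₂)

lemma of_append (h : IsWalk A ν u w (l₁ ++ l₂)) :
    ∃ x, IsWalk A ν u x l₁ ∧ IsWalk A ν x w l₂ := by
  induction l₁ generalizing u with
  | nil => exact ⟨u, nil u, h⟩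
  | cons e t ih =>
    obtain ⟨he, rfl, ht⟩ := h.of_cons
    obtain ⟨x, h₁, h₂⟩ := ih ht
    exact ⟨x, cons he h₁, h₂⟩

lemma mono (hAB : A ⊆ B) (h : IsWalk A ν u w l) : IsWalk B ν u w l := by
  induction h with
  | nil u => exact nil u
  | cons he _ ih => exact cons (hAB he) ih

lemma mem (h : IsWalk A ν u w l) {e : ColEdge n} (he : e ∈ l) : e ∈ A := by
  induction h with
  | nil => simp at he
  | cons he' _ ih =>
    rcases List.mem_cons.1 he with rfl | he
    · exact he'
    · exact ih he

lemma map_fst_append (h : IsWalk A ν u w l) :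
    l.map Prod.fst ++ [w] = u :: l.map fun e => ν e.2.1 := by
  induction h with
  | nil => rfl
  | cons _ _ ih => simp [ih]

lemma perm_of_closed (h : IsWalk A ν u u l) :
    (l.map Prod.fst).Perm (l.map fun e => ν e.2.1) := by
  have := (List.perm_append_singleton u (l.map Prod.fst)).symm
  rw [h.map_fst_append] at this
  exact this.cons_inv

end IsWalk

section Parity

variable {E : Finset (ColEdge n)} {σ₀ : Equiv.Perm (Fin n)} {c₀ : Fin n → Bool}

variable (σ₀ c₀) in
def arcWeight (e : ColEdge n) : ZMod 2 := bit e.2.2 + bit (c₀ (σ₀.symm e.2.1))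

variable (σ₀ c₀) in
def walkWeight (l : List (ColEdge n)) : ZMod 2 := (l.map (arcWeight σ₀ c₀)).sum

@[simp] lemma walkWeight_nil : walkWeight σ₀ c₀ [] = 0 := rfl

@[simp] lemma walkWeight_cons (e : ColEdge n) (l : List (ColEdge n)) :
    walkWeight σ₀ c₀ (e :: l) = arcWeight σ₀ c₀ e + walkWeight σ₀ c₀ l := by
  simp [walkWeight]

@[simp] lemma walkWeight_append (l₁ l₂ : List (ColEdge n)) :
    walkWeight σ₀ c₀ (l₁ ++ l₂) = walkWeight σ₀ c₀ l₁ + walkWeight σ₀ c₀ l₂ := by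
  simp [walkWeight]

lemma RedEven.sum_arcWeight_eq_zero (hE : RedEven E) (h₀ : ∀ u, (u, σ₀ u, c₀ u) ∈ E)
    {S : Finset (Fin n)} {a : Fin n → ColEdge n} (ha : ∀ x ∈ S, a x ∈ E ∧ (a x).1 = x)
    (hmaps : ∀ x ∈ S, σ₀.symm (a x).2.1 ∈ S)
    (hinj : Set.InjOn (fun x => σ₀.symm (a x).2.1) S) :
    ∑ x ∈ S, arcWeight σ₀ c₀ (a x) = 0 := by
  classical
  -- `M₀` rerouted along the cycle `x ↦ σ₀⁻¹ (a x).2.1` on `S`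
  let σ x := if x ∈ S then (a x).2.1 else σ₀ x
  let c x := if x ∈ S then (a x).2.2 else c₀ x
  have hσ : Injective σ := by
    intro x y h
    by_cases hx : x ∈ S <;> by_cases hy : y ∈ S <;>
      simp only [σ, hx, hy, if_true, if_false] at h
    · exact hinj hx hy (congrArg σ₀.symm h)
    · exact absurd (σ₀.symm_apply_apply y ▸ h ▸ hmaps x hx) hy
    · exact absurd (σ₀.symm_apply_apply x ▸ h.symm ▸ hmaps y hy) hx
    · exact σ₀.injective h
  have hσE : ∀ u, (u, σ u, c u) ∈ E := by
    intro u
    by_cases hu : u ∈ S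
    · simp only [σ, c, hu, if_true]
      rw [show (u, (a u).2.1, (a u).2.2) = a u from Prod.ext (ha u hu).2.symm rfl]
      exact (ha u hu).1
    · simp only [σ, c, hu, if_false]
      exact h₀ u
  have hrerouted := hE σ c hσ hσE
  rw [← sum_add_sum_compl S] at hrerouted
  have hin : ∑ x ∈ S, bit (c x) = ∑ x ∈ S, bit (a x).2.2 :=
    sum_congr rfl fun x hx => by simp only [c, if_pos hx]
  have hout : ∑ x ∈ Sᶜ, bit (c x) = ∑ x ∈ Sᶜ, bit (c₀ x) :=
    sum_congr rfl fun x hx => by simp only [c, if_neg (mem_compl.1 hx)]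
  rw [hin, hout] at hrerouted
  have hM₀ := hE σ₀ c₀ σ₀.injective h₀
  rw [← sum_add_sum_compl S] at hM₀
  have hshift : ∑ x ∈ S, bit (c₀ (σ₀.symm (a x).2.1)) = ∑ x ∈ S, bit (c₀ x) :=
    sum_nbij _ hmaps hinj (surjOn_of_injOn_of_card_le _ hmaps hinj le_rfl) fun _ _ => rfl
  have hred : ∑ x ∈ S, bit (a x).2.2 = ∑ x ∈ S, bit (c₀ x) :=
    add_right_cancel (hrerouted.trans hM₀.symm)
  simp only [arcWeight, sum_add_distrib, hshift, hred, CharTwo.add_self_eq_zero]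

lemma RedEven.walkWeight_eq_zero_of_nodup (hE : RedEven E) (h₀ : ∀ u, (u, σ₀ u, c₀ u) ∈ E)
    {u : Fin n} {l : List (ColEdge n)} (hl : IsWalk E σ₀.symm u u l)
    (hnd : (l.map Prod.fst).Nodup) : walkWeight σ₀ c₀ l = 0 := by
  classical
  have hperm := hl.perm_of_closed
  have hnd' := hperm.nodup_iff.1 hnd
  let S := (l.map Prod.fst).toFinset
  have hS : ∀ x ∈ S, ∃ e ∈ l, e.1 = x := fun x hx =>
    List.mem_map.1 (List.mem_toFinset.1 hx)
  choose! a ha using hS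
  have ha_fst : ∀ e ∈ l, a e.1 = e := fun e he =>
    have hae := ha e.1 (List.mem_toFinset.2 (List.mem_map_of_mem he))
    List.inj_on_of_nodup_map hnd hae.1 he hae.2
  have hsum : walkWeight σ₀ c₀ l = ∑ x ∈ S, arcWeight σ₀ c₀ (a x) := by
    rw [List.sum_toFinset _ hnd, List.map_map, walkWeight]
    congr 1
    exact List.map_congr_left fun e he => by simp [ha_fst e he]
  rw [hsum]
  refine hE.sum_arcWeight_eq_zero h₀ (fun x hx => ⟨hl.mem (ha x hx).1, (ha x hx).2⟩)
    (fun x hx => ?_) fun x hx y hy hxy => ?_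
  · rw [List.mem_toFinset, hperm.mem_iff]
    exact List.mem_map_of_mem (f := fun e => σ₀.symm e.2.1) (ha x hx).1
  · rw [← (ha x hx).2, ← (ha y hy).2,
      List.inj_on_of_nodup_map hnd' (ha x hx).1 (ha y hy).1 hxy]

lemma RedEven.walkWeight_eq_zero (hE : RedEven E) (h₀ : ∀ u, (u, σ₀ u, c₀ u) ∈ E)
    {u : Fin n} {l : List (ColEdge n)} (hl : IsWalk E σ₀.symm u u l) :
    walkWeight σ₀ c₀ l = 0 := by
  induction hlen : l.length using Nat.strong_induction_on generalizing u l with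
  | _ k ih =>
  by_cases hnd : (l.map Prod.fst).Nodup
  · exact hE.walkWeight_eq_zero_of_nodup h₀ hl hnd
  obtain ⟨l₁, e, l₂, e', l₃, rfl, hee'⟩ :=
    List.exists_eq_append_cons_append_cons_of_not_nodup_map _ hnd
  obtain ⟨y, h₁₂, h₃⟩ := hl.of_append
  obtain ⟨x, h₁, h₂⟩ := h₁₂.of_append
  obtain rfl : x = e.1 := h₂.of_cons.2.1.symm
  obtain rfl : y = e'.1 := h₃.of_cons.2.1.symm
  rw [← hee'] at h₂ h₃
  simp only [List.length_append, List.length_cons] at hlen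
  have hinner := ih _ (by simp only [List.length_cons]; omega) h₂ rfl
  have houter :=
    ih _ (by simp only [List.length_append, List.length_cons]; omega) (h₁.append h₃) rfl
  simp only [walkWeight_append] at hinner houter ⊢
  linear_combination hinner + houter

def relevantEdges (E : Finset (ColEdge n)) : Set (ColEdge n) :=
  {e | ∃ M, IsPM E M ∧ e ∈ M}

lemma relevantEdges_subset : relevantEdges E ⊆ E := fun _ ⟨_, hM, he⟩ => hM.1 he

lemma RedEven.exists_reverse_walk (hE : RedEven E) (h₀ : ∀ u, (u, σ₀ u, c₀ u) ∈ E)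
    {e : ColEdge n} (he : e ∈ relevantEdges E) :
    ∃ l, IsWalk (relevantEdges E) σ₀.symm (σ₀.symm e.2.1) e.1 l ∧
      walkWeight σ₀ c₀ l = arcWeight σ₀ c₀ e := by
  obtain ⟨M, hM, heM⟩ := he
  obtain ⟨σ, c, rfl⟩ := hM.exists_eq_matchingOf
  have hrel : ∀ u, (u, σ u, c u) ∈ relevantEdges E := fun u =>
    ⟨_, hM, mem_matchingOf.2 rfl⟩
  -- the `M`-edges around the `τ`-cycle of `e.1` form a closed walk starting with `e`
  let τ : Equiv.Perm (Fin n) := σ.trans σ₀.symm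
  have horbit : ∀ j x, ∃ l, IsWalk (relevantEdges E) σ₀.symm x ((τ ^ j) x) l := by
    intro j
    induction j with
    | zero => exact fun x => ⟨[], .nil x⟩
    | succ j ih =>
      intro x
      obtain ⟨l, hl⟩ := ih (τ x)
      exact ⟨_, .cons (hrel x) (by rwa [pow_succ, Equiv.Perm.mul_apply])⟩
  have hτe : σ₀.symm e.2.1 = τ e.1 := by rw [mem_matchingOf.1 heM]; rfl
  obtain ⟨l, hl⟩ := horbit (orderOf τ - 1) (τ e.1)
  rw [← Equiv.Perm.mul_apply, pow_sub_one_mul (orderOf_pos τ).ne', pow_orderOf_eq_one,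
    Equiv.Perm.one_apply, ← hτe] at hl
  refine ⟨l, hl, ?_⟩
  have hclosed := hE.walkWeight_eq_zero h₀
    ((IsWalk.cons (show e ∈ relevantEdges E from ⟨_, hM, heM⟩) hl).mono relevantEdges_subset)
  rw [walkWeight_cons] at hclosed
  exact (CharTwo.add_eq_zero.1 hclosed).symm

variable (E σ₀ c₀) in
def Reach (u x : Fin n) (p : ZMod 2) : Prop :=
  ∃ l, IsWalk (relevantEdges E) σ₀.symm u x l ∧ walkWeight σ₀ c₀ l = p

lemma reach_refl (u : Fin n) : Reach E σ₀ c₀ u u 0 := ⟨[], .nil u, rfl⟩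

lemma reach_arc {e : ColEdge n} (he : e ∈ relevantEdges E) :
    Reach E σ₀ c₀ e.1 (σ₀.symm e.2.1) (arcWeight σ₀ c₀ e) :=
  ⟨[e], .cons he (.nil _), by simp⟩

lemma Reach.trans {u x w : Fin n} {p q : ZMod 2} (h₁ : Reach E σ₀ c₀ u x p)
    (h₂ : Reach E σ₀ c₀ x w q) : Reach E σ₀ c₀ u w (p + q) := by
  obtain ⟨l₁, hl₁, rfl⟩ := h₁
  obtain ⟨l₂, hl₂, rfl⟩ := h₂
  exact ⟨l₁ ++ l₂, hl₁.append hl₂, walkWeight_append _ _⟩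

lemma RedEven.reach_symm (hE : RedEven E) (h₀ : ∀ u, (u, σ₀ u, c₀ u) ∈ E) {u x : Fin n}
    {p : ZMod 2} (h : Reach E σ₀ c₀ u x p) : Reach E σ₀ c₀ x u p := by
  obtain ⟨l, hl, rfl⟩ := h
  induction hl with
  | nil u => exact reach_refl u
  | cons he _ ih =>
    rw [walkWeight_cons, add_comm]
    exact ih.trans (hE.exists_reverse_walk h₀ he)

lemma RedEven.reach_unique (hE : RedEven E) (h₀ : ∀ u, (u, σ₀ u, c₀ u) ∈ E) {u x : Fin n}
    {p q : ZMod 2} (hp : Reach E σ₀ c₀ u x p) (hq : Reach E σ₀ c₀ u x q) : p = q := by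
  obtain ⟨l, hl, hw⟩ := hp.trans (hE.reach_symm h₀ hq)
  exact CharTwo.add_eq_zero.1 (hw ▸ hE.walkWeight_eq_zero h₀ (hl.mono relevantEdges_subset))

lemma RedEven.exists_potential (hE : RedEven E) (h₀ : ∀ u, (u, σ₀ u, c₀ u) ∈ E) :
    ∃ φ : Fin n → ZMod 2, ∀ e ∈ relevantEdges E,
      φ (σ₀.symm e.2.1) = φ e.1 + arcWeight σ₀ c₀ e := by
  let r u x := ∃ p, Reach E σ₀ c₀ u x p
  have hr : Equivalence r :=
    ⟨fun u => ⟨0, reach_refl u⟩, fun ⟨p, h⟩ => ⟨p, hE.reach_symm h₀ h⟩,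
      fun ⟨_, h⟩ ⟨_, h'⟩ => ⟨_, h.trans h'⟩⟩
  let root u := (Quot.mk r u).out
  have hroot : ∀ u, r (root u) u := fun u => hr.eqvGen_iff.1 (Quot.eqvGen_exact (Quot.out_eq _))
  choose φ hφ using hroot
  refine ⟨φ, fun e he => hE.reach_unique h₀ (hφ _) ?_⟩
  have harc := reach_arc (σ₀ := σ₀) (c₀ := c₀) he
  have hsame : root e.1 = root (σ₀.symm e.2.1) := congrArg Quot.out (Quot.sound ⟨_, harc⟩)
  exact hsame ▸ (hφ e.1).trans harc

end Parity

lemma decide_eq_one_consistent (a : ZMod 2) (c : Bool) :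
    (c = true ∧ decide (a = 1) = decide (a + bit c = 0)) ∨
      (c = false ∧ decide (a = 1) ≠ decide (a + bit c = 0)) := by
  revert a c; decide

lemma natCast_card_filter_decide_eq_one {α : Type*} [Fintype α] (f : α → ZMod 2) :
    (#(univ.filter fun u => decide (f u = 1) = true) : ZMod 2) = ∑ u, f u := by
  rw [natCast_card_filter]
  exact sum_congr rfl fun a _ => by generalize f a = x; revert x; decide

lemma natCast_card_filter_decide_eq_zero {α : Type*} [Fintype α] (f : α → ZMod 2) :
    (#(univ.filter fun u => decide (f u = 0) = true) : ZMod 2) = ∑ u, (f u + 1) := by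
  rw [natCast_card_filter]
  exact sum_congr rfl fun a _ => by generalize f a = x; revert x; decide

lemma card_labels_mod_two {σ₀ : Equiv.Perm (Fin n)} {c₀ : Fin n → Bool}
    (hM₀ : ∑ u, bit (c₀ u) = 0) (φ : Fin n → ZMod 2) :
    (#(univ.filter fun u => decide (φ u = 1) = true) +
      #(univ.filter fun v => decide (φ (σ₀.symm v) + bit (c₀ (σ₀.symm v)) = 0) = true)) % 2
      = n % 2 := by
  rw [← ZMod.natCast_eq_natCast_iff', Nat.cast_add, natCast_card_filter_decide_eq_one,
    natCast_card_filter_decide_eq_zero, σ₀.symm.sum_comp fun u => φ u + bit (c₀ u) + 1]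
  simp only [sum_add_distrib, hM₀, add_zero, ← add_assoc, CharTwo.add_self_eq_zero, zero_add,
    sum_const, card_univ, Fintype.card_fin, nsmul_eq_mul, mul_one]

/-- If the colored bipartite graph has a perfect matching but no perfect
matching with an odd number of red edges, then there is a labeling `(LU, LV)`
with `|L⁻¹(1)| ≡ n (mod 2)` such that every edge lying in some perfect matching
is consistent with it: red edges join equally labeled vertices and blue edges
join differently labeled vertices. -/
theorem stmt14 {n : ℕ} (E : Finset (ColEdge n))
    (hpm : ∃ M, IsPM E M)
    (hnoodd : ¬ ∃ M, IsPM E M ∧ Odd (M.filter (fun e => e.2.2 = true)).card) :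
    ∃ LU LV : Fin n → Bool,
      ((Finset.univ.filter (fun u => LU u = true)).card +
        (Finset.univ.filter (fun v => LV v = true)).card) % 2 = n % 2 ∧
      ∀ e ∈ E, (∃ M, IsPM E M ∧ e ∈ M) →
        ((e.2.2 = true ∧ LU e.1 = LV e.2.1) ∨
         (e.2.2 = false ∧ LU e.1 ≠ LV e.2.1)) := by
  obtain ⟨M₀, hM₀⟩ := hpm
  obtain ⟨σ₀, c₀, rfl⟩ := hM₀.exists_eq_matchingOf
  have h₀ : ∀ u, (u, σ₀ u, c₀ u) ∈ E := fun u => hM₀.1 (mem_matchingOf.2 rfl)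
  have hE := redEven_of_not_exists_odd hnoodd
  obtain ⟨φ, hφ⟩ := hE.exists_potential h₀
  refine ⟨fun u => decide (φ u = 1),
    fun v => decide (φ (σ₀.symm v) + bit (c₀ (σ₀.symm v)) = 0),
    card_labels_mod_two (hE σ₀ c₀ σ₀.injective h₀) φ, fun e _ he => ?_⟩
  dsimp only
  rw [hφ e he, arcWeight, ← add_assoc, CharTwo.add_cancel_right]
  exact decide_eq_one_consistent _ _
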